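/- Let (X,d) be a compact metric space and (f_n) a sequence of continuous self-maps converging uniformly to f. Let N ∈ ℕ and s > 0. Then there exists 0 < p < s such that for all x,y ∈ X: if d(f_1^{jN−i}(x), f_1^{jN−i}(y)) < p for some j ≥ 1 and 1 ≤ i ≤ N, then d(f_1^{jN}(x), f_1^{jN}(y)) < s. Consequently, for all n, N·(δ_n(f_{1,∞}^N, x, y, s) − 1) ≤ δ_{Nn}(f_{1,∞}, x, y, p), where δ_n counts the fraction of times 0 ≤ i < n at which the orbit distance is ≥ the given threshold. -/

import Mathlib

open Filter
open scoped Classical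

variable {X : Type*}

/-- `orb f n = f_n ∘ ⋯ ∘ f_1` (0-based: `f k` is the `(k+1)`-st map). -/
def orb (f : ℕ → X → X) : ℕ → X → X
  | 0 => id
  | n + 1 => f n ∘ orb f n

/-! The maps `f_n` are uniformly equicontinuous (the limit absorbs all but finitely many of them),
hence so is every family of compositions `f_{m+i} ∘ ⋯ ∘ f_{m+1}` of bounded length `i ≤ N`.
This gives `p` such that `p`-closeness at time `jN - i` forces `s`-closeness at time `jN`.
Consequently every `j ≥ 1` with `d(f_1^{jN} x, f_1^{jN} y) ≥ s` forces the whole block of `N`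
times `jN - N, …, jN - 1` to be `p`-separated, and these blocks are disjoint. -/

open Finset Topology Uniformity

theorem orb_add (f : ℕ → X → X) (m i : ℕ) :
    orb f (m + i) = orb (fun k => f (m + k)) i ∘ orb f m := by
  induction i with
  | zero => rfl
  | succ i ih =>
    show f (m + i) ∘ orb f (m + i) = _
    rw [ih]
    rfl

theorem TendstoUniformly.uniformEquicontinuous {β α : Type*} [UniformSpace β] [CompactSpace β]
    [PseudoMetricSpace α] {F : ℕ → β → α} {g : β → α} (hF : ∀ n, Continuous (F n))
    (hFg : TendstoUniformly F g atTop) : UniformEquicontinuous F := by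
  rw [Metric.uniformEquicontinuous_iff_right]
  intro ε hε
  obtain ⟨M, hM⟩ :=
    eventually_atTop.1 (Metric.tendstoUniformly_iff.1 hFg (ε / 3) (by positivity))
  have hg : UniformContinuous g :=
    CompactSpace.uniformContinuous_of_continuous (hFg.continuous (.of_forall hF))
  have hfin : UniformEquicontinuous fun n : Fin M => F n :=
    uniformEquicontinuous_finite.2 fun n => CompactSpace.uniformContinuous_of_continuous (hF n)
  filter_upwards [Metric.uniformEquicontinuous_iff_right.1 hfin ε hε,
    hg (Metric.dist_mem_uniformity (by positivity : 0 < ε / 3))] with ⟨x, y⟩ hlow hgxy n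
  rcases lt_or_ge n M with hn | hn
  · exact hlow ⟨n, hn⟩
  · calc dist (F n x) (F n y) ≤ dist (F n x) (g x) + dist (g x) (g y) + dist (g y) (F n y) :=
          dist_triangle4 _ _ _ _
      _ < ε / 3 + ε / 3 + ε / 3 := by
          gcongr
          · exact dist_comm (F n x) (g x) ▸ hM n hn x
          · exact hgxy
          · exact hM n hn y
      _ = ε := by ring

theorem UniformEquicontinuous.comp_uniformEquicontinuous {ι κ α β γ : Type*} [UniformSpace α]
    [UniformSpace β] [UniformSpace γ] {F : ι → β → α} {G : κ → γ → β}
    (hF : UniformEquicontinuous F) (hG : UniformEquicontinuous G) :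
    UniformEquicontinuous fun p : ι × κ => F p.1 ∘ G p.2 := by
  intro U hU
  filter_upwards [hG _ (hF U hU)] with xy h p using h p.2 p.1

theorem UniformEquicontinuous.orb_shift [UniformSpace X] {F : ℕ → X → X}
    (hF : UniformEquicontinuous F) (i : ℕ) :
    UniformEquicontinuous fun m => orb (fun k => F (m + k)) i := by
  induction i with
  | zero =>
    intro U hU
    filter_upwards [hU] with xy h _ using h
  | succ i ih => exact (hF.comp_uniformEquicontinuous ih).comp fun m => (m + i, m)

theorem UniformEquicontinuous.exists_dist_orb_add_lt [PseudoMetricSpace X] {F : ℕ → X → X}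
    (hF : UniformEquicontinuous F) (K : ℕ) {s : ℝ} (hs : 0 < s) :
    ∃ p : ℝ, 0 < p ∧ p < s ∧ ∀ x y : X, ∀ m i : ℕ, i ≤ K →
      dist (orb F m x) (orb F m y) < p → dist (orb F (m + i) x) (orb F (m + i) y) < s := by
  have hblocks : ∀ᶠ xy in 𝓤 X, ∀ i : Fin (K + 1), ∀ m,
      dist (orb (fun k => F (m + k)) i xy.1) (orb (fun k => F (m + k)) i xy.2) < s :=
    eventually_all.2 fun i => Metric.uniformEquicontinuous_iff_right.1 (hF.orb_shift i) s hs
  obtain ⟨δ, hδ, hδblocks⟩ := Metric.mem_uniformity_dist.1 hblocks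
  refine ⟨min δ (s / 2), by positivity, by linarith [min_le_right δ (s / 2)],
    fun x y m i hi hxy => ?_⟩
  rw [orb_add]
  exact hδblocks (hxy.trans_le (min_le_left _ _)) ⟨i, by omega⟩ m

theorem card_mul_le_card_of_sub_mem {A T : Finset ℕ} {N : ℕ} (hA : 0 ∉ A)
    (hT : ∀ j ∈ A, ∀ i ∈ Icc 1 N, j * N - i ∈ T) : #A * N ≤ #T := by
  calc #A * N = #(A ×ˢ Icc 1 N) := by simp
    _ ≤ #T := card_le_card_of_injOn (fun q => q.1 * N - q.2)
        (fun q hq => hT q.1 (mem_product.1 hq).1 q.2 (mem_product.1 hq).2) ?_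
  rintro ⟨j, i⟩ hji ⟨j', i'⟩ hji' heq
  simp only [coe_product, Set.mem_prod, mem_coe, mem_Icc] at hji hji' heq
  have hj : N ≤ j * N :=
    Nat.le_mul_of_pos_left N (Nat.pos_of_ne_zero (ne_of_mem_of_not_mem hji.1 hA))
  have hj' : N ≤ j' * N :=
    Nat.le_mul_of_pos_left N (Nat.pos_of_ne_zero (ne_of_mem_of_not_mem hji'.1 hA))
  rcases lt_trichotomy j j' with hlt | rfl | hgt
  · have := Nat.mul_le_mul_right N (Nat.succ_le_of_lt hlt)
    rw [Nat.succ_mul] at this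
    omega
  · simp only [Prod.mk.injEq, true_and]
    omega
  · have := Nat.mul_le_mul_right N (Nat.succ_le_of_lt hgt)
    rw [Nat.succ_mul] at this
    omega

theorem stmt_18_general [MetricSpace X] [CompactSpace X] (f : ℕ → X → X) (g : X → X)
    (hf : ∀ n, Continuous (f n)) (hconv : TendstoUniformly f g atTop)
    (N : ℕ) (s : ℝ) (hs : 0 < s) :
    ∃ p : ℝ, 0 < p ∧ p < s ∧
      (∀ x y : X, ∀ j : ℕ, 1 ≤ j → ∀ i : ℕ, 1 ≤ i → i ≤ N →
        dist (orb f (j * N - i) x) (orb f (j * N - i) y) < p →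
        dist (orb f (j * N) x) (orb f (j * N) y) < s) ∧
      ∀ x y : X, ∀ n : ℕ,
        (N : ℤ) * ((((Finset.range n).filter
            (fun i => s ≤ dist (orb f (N * i) x) (orb f (N * i) y))).card : ℤ) - 1)
          ≤ (((Finset.range (N * n)).filter
            (fun i => p ≤ dist (orb f i x) (orb f i y))).card : ℤ) := by
  obtain ⟨p, hp, hps, hstep⟩ :=
    (hconv.uniformEquicontinuous hf).exists_dist_orb_add_lt N hs
  have hblock : ∀ x y : X, ∀ j : ℕ, 1 ≤ j → ∀ i : ℕ, 1 ≤ i → i ≤ N →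
      dist (orb f (j * N - i) x) (orb f (j * N - i) y) < p →
      dist (orb f (j * N) x) (orb f (j * N) y) < s := by
    intro x y j hj i _ hiN hxy
    have hm : j * N - i + i = j * N :=
      Nat.sub_add_cancel (hiN.trans (Nat.le_mul_of_pos_left N hj))
    simpa only [hm] using hstep x y (j * N - i) i hiN hxy
  refine ⟨p, hp, hps, hblock, fun x y n => ?_⟩
  set S := (range n).filter fun i => s ≤ dist (orb f (N * i) x) (orb f (N * i) y)
  set T := (range (N * n)).filter fun i => p ≤ dist (orb f i x) (orb f i y)
  have hST : #(S.erase 0) * N ≤ #T := by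
    refine card_mul_le_card_of_sub_mem (notMem_erase 0 S) fun j hj i hi => ?_
    obtain ⟨hj0, hjS⟩ := mem_erase.1 hj
    obtain ⟨hjn, hjs⟩ := mem_filter.1 hjS
    obtain ⟨hi1, hiN⟩ := mem_Icc.1 hi
    have hjN : j * N < N * n := by
      rw [mul_comm N]
      exact Nat.mul_lt_mul_of_pos_right (mem_range.1 hjn) (by omega)
    refine mem_filter.2 ⟨mem_range.2 (by omega), not_lt.1 fun hlt => ?_⟩
    have := hblock x y j (Nat.one_le_iff_ne_zero.2 hj0) i hi1 hiN hlt
    rw [mul_comm N j] at hjs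
    linarith
  have hS : (#S : ℤ) - 1 ≤ #(S.erase 0) := by
    have := pred_card_le_card_erase (s := S) (a := 0)
    omega
  calc (N : ℤ) * (#S - 1) ≤ N * #(S.erase 0) := by gcongr
    _ = ((#(S.erase 0) * N : ℕ) : ℤ) := by push_cast; ring
    _ ≤ #T := by exact_mod_cast hST

theorem stmt_18 [MetricSpace X] [CompactSpace X] (f : ℕ → X → X) (g : X → X)
    (hf : ∀ n, Continuous (f n)) (hconv : TendstoUniformly f g atTop)
    (N : ℕ) (hN : 0 < N) (s : ℝ) (hs : 0 < s) :
    ∃ p : ℝ, 0 < p ∧ p < s ∧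
      (∀ x y : X, ∀ j : ℕ, 1 ≤ j → ∀ i : ℕ, 1 ≤ i → i ≤ N →
        dist (orb f (j * N - i) x) (orb f (j * N - i) y) < p →
        dist (orb f (j * N) x) (orb f (j * N) y) < s) ∧
      ∀ x y : X, ∀ n : ℕ,
        (N : ℤ) * ((((Finset.range n).filter
            (fun i => s ≤ dist (orb f (N * i) x) (orb f (N * i) y))).card : ℤ) - 1)
          ≤ (((Finset.range (N * n)).filter
            (fun i => p ≤ dist (orb f i x) (orb f i y))).card : ℤ) :=
  stmt_18_general f g hf hconv N s hs
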